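/- arXiv:1103.0331 — 2 statements merged into one kernel-verified Lean document; each statement's English description precedes it below -/
import Mathlib

section
/- For every positive integer n, the 2-adic valuation of ∏_{j=1}^n [(2j)(2j+1)⋯(3j-2)] / [j(j+1)⋯(2j-2)] equals n + ∑_{j=1}^n (s_2(j-1) - s_2(3j-2)). -/
def s2 (m : ℕ) : ℕ := (Nat.digits 2 m).sum

open Finset Nat

lemma s2_le (m : ℕ) : s2 m ≤ m := Nat.digit_sum_le 2 m

lemma s2_two_mul (m : ℕ) : s2 (2 * m) = s2 m := by
  rcases Nat.eq_zero_or_pos m with h | h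
  · simp [h, s2]
  · unfold s2
    rw [Nat.digits_def' (by norm_num) (by omega)]
    simp [Nat.mul_div_cancel_left m (by norm_num : 0 < 2), Nat.mul_mod_right]

lemma s2_two_mul_add_one (m : ℕ) : s2 (2 * m + 1) = s2 m + 1 := by
  unfold s2
  rw [Nat.digits_def' (by norm_num) (by omega)]
  have h1 : (2 * m + 1) % 2 = 1 := by omega
  have h2 : (2 * m + 1) / 2 = m := by omega
  rw [h1, h2]; simp [Nat.add_comm]

lemma v2_factorial (m : ℕ) : (padicValNat 2 (m !) : ℤ) = (m : ℤ) - s2 m := by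
  have := @sub_one_mul_padicValNat_factorial 2 ⟨Nat.prime_two⟩ m
  simp only [show (2:ℕ) - 1 = 1 from rfl, one_mul] at this
  have hle : s2 m ≤ m := s2_le m
  unfold s2 at hle ⊢
  omega

lemma fact_mul_prod (a : ℕ) : ∀ b, a ≤ b → a ! * ∏ m ∈ Icc (a + 1) b, m = b ! := by
  intro b
  induction b with
  | zero => intro h; interval_cases a; simp
  | succ b ih =>
    intro h
    rcases Nat.lt_or_ge a (b+1) with h' | h'
    · have hab : a ≤ b := by omega
      rw [show Icc (a+1) (b+1) = insert (b+1) (Icc (a+1) b) by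
            rw [Finset.insert_Icc_right_eq_Icc_add_one (by omega)]]
      rw [Finset.prod_insert (by simp), ← mul_assoc, mul_comm (a !) (b+1), mul_assoc,
        ih hab, Nat.factorial_succ]
    · have : a = b + 1 := by omega
      subst this
      simp

lemma prod_Icc_cast (a b : ℕ) : (∏ m ∈ Icc a b, (m : ℚ)) = ((∏ m ∈ Icc a b, m : ℕ) : ℚ) := by
  push_cast; ring

lemma v2_prod_Icc (a b : ℕ) (h : a ≤ b) :
    padicValRat 2 (∏ m ∈ Icc (a + 1) b, (m : ℚ)) =
      (padicValNat 2 (b !) : ℤ) - padicValNat 2 (a !) := by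
  rw [prod_Icc_cast, padicValRat.of_nat]
  have key := fact_mul_prod a b h
  have hb : b ! ≠ 0 := Nat.factorial_ne_zero b
  have ha : a ! ≠ 0 := Nat.factorial_ne_zero a
  have hP : (∏ m ∈ Icc (a + 1) b, m) ≠ 0 := by
    intro h0; rw [h0, mul_zero] at key; exact hb key.symm
  have : padicValNat 2 (b !) = padicValNat 2 (a !) + padicValNat 2 (∏ m ∈ Icc (a + 1) b, m) := by
    rw [← key, @padicValNat.mul 2 _ _ ⟨Nat.prime_two⟩ ha hP]
  omega

lemma prod_Icc_ne_zero (a b : ℕ) (ha : 0 < a) : (∏ m ∈ Icc a b, (m : ℚ)) ≠ 0 := by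
  apply Finset.prod_ne_zero_iff.2
  intro m hm
  simp only [mem_Icc] at hm
  exact_mod_cast (by omega : m ≠ 0)

lemma key_factor (j : ℕ) (hj : 1 ≤ j) :
    padicValRat 2 ((∏ m ∈ Finset.Icc (2 * j) (3 * j - 2), (m : ℚ)) /
      (∏ m ∈ Finset.Icc j (2 * j - 2), (m : ℚ))) =
      1 + (s2 (j - 1) : ℤ) - (s2 (3 * j - 2) : ℤ) := by
  have hnum := prod_Icc_ne_zero (2 * j) (3 * j - 2) (by omega)
  have hden := prod_Icc_ne_zero j (2 * j - 2) (by omega)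
  rw [padicValRat.div hnum hden]
  have e1 : 2 * j = (2 * j - 1) + 1 := by omega
  have e2 : j = (j - 1) + 1 := by omega
  rw [show Icc (2 * j) (3 * j - 2) = Icc ((2 * j - 1) + 1) (3 * j - 2) by rw [← e1],
      show Icc j (2 * j - 2) = Icc ((j - 1) + 1) (2 * j - 2) by rw [← e2]]
  rw [v2_prod_Icc _ _ (by omega), v2_prod_Icc _ _ (by omega)]
  rw [v2_factorial, v2_factorial, v2_factorial, v2_factorial]
  have h1 : s2 (2 * j - 1) = s2 (j - 1) + 1 := by
    have : 2 * j - 1 = 2 * (j - 1) + 1 := by omega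
    rw [this, s2_two_mul_add_one]
  have h2 : s2 (2 * j - 2) = s2 (j - 1) := by
    have : 2 * j - 2 = 2 * (j - 1) := by omega
    rw [this, s2_two_mul]
  rw [h1, h2]
  have c1 : ((3 * j - 2 : ℕ) : ℤ) = 3 * j - 2 := by omega
  have c2 : ((2 * j - 1 : ℕ) : ℤ) = 2 * j - 1 := by omega
  have c3 : ((2 * j - 2 : ℕ) : ℤ) = 2 * j - 2 := by omega
  have c4 : ((j - 1 : ℕ) : ℤ) = j - 1 := by omega
  rw [c1, c2, c3, c4]
  push_cast
  ring

lemma padicValRat_prod {s : Finset ℕ} {f : ℕ → ℚ} (h : ∀ i ∈ s, f i ≠ 0) :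
    padicValRat 2 (∏ i ∈ s, f i) = ∑ i ∈ s, padicValRat 2 (f i) := by
  induction s using Finset.cons_induction with
  | empty => simp [padicValRat.one]
  | cons a s ha ih =>
    rw [Finset.prod_cons, Finset.sum_cons,
      padicValRat.mul (h a (Finset.mem_cons_self a s))
        (Finset.prod_ne_zero_iff.2 fun i hi => h i (Finset.mem_cons_of_mem hi)),
      ih fun i hi => h i (Finset.mem_cons_of_mem hi)]

theorem v2_third_factor (n : ℕ) (hn : 0 < n) :
    padicValRat 2 (∏ j ∈ Finset.Icc 1 n,
        ((∏ m ∈ Finset.Icc (2 * j) (3 * j - 2), (m : ℚ)) /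
          (∏ m ∈ Finset.Icc j (2 * j - 2), (m : ℚ)))) =
      n + ∑ j ∈ Finset.Icc 1 n, ((s2 (j - 1) : ℤ) - (s2 (3 * j - 2) : ℤ)) := by
  rw [padicValRat_prod (fun j hj => by
    have h1 : 1 ≤ j := (Finset.mem_Icc.1 hj).1
    exact div_ne_zero (prod_Icc_ne_zero _ _ (by omega)) (prod_Icc_ne_zero _ _ (by omega)))]
  rw [Finset.sum_congr rfl (fun j hj => key_factor j (Finset.mem_Icc.1 hj).1)]
  have e : ∑ j ∈ Finset.Icc 1 n, ((1:ℤ) + (s2 (j-1):ℤ) - (s2 (3*j-2):ℤ)) =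
      ∑ j ∈ Finset.Icc 1 n, ((1:ℤ) + ((s2 (j-1):ℤ) - (s2 (3*j-2):ℤ))) :=
    Finset.sum_congr rfl fun j _ => by ring
  rw [e, Finset.sum_add_distrib, Finset.sum_const, Nat.card_Icc]
  simp only [nsmul_eq_mul, mul_one]
  congr 1
end

section
/- For every positive integer k, 2k + ∑_{j=0}^{k-1} (s_2(j) - s_2(j+2k)) > 0. -/
-- trailing ones
def tr (n : ℕ) : ℕ :=
  if h : n % 2 = 1 then tr (n / 2) + 1 else 0
decreasing_by exact Nat.div_lt_self (by omega) (by norm_num)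

lemma tr_even (n : ℕ) : tr (2 * n) = 0 := by
  rw [tr]; simp [Nat.mul_mod_right]

lemma tr_odd (n : ℕ) : tr (2 * n + 1) = tr n + 1 := by
  rw [tr]
  have h1 : (2 * n + 1) % 2 = 1 := by omega
  have h2 : (2 * n + 1) / 2 = n := by omega
  simp [h1, h2]

lemma s2_zero : s2 0 = 0 := by simp [s2]

lemma s2_rec (m : ℕ) (h : 0 < m) : s2 m = m % 2 + s2 (m / 2) := by
  unfold s2
  rw [Nat.digits_def' (by norm_num : 1 < 2) h]
  simp

lemma s2_even (n : ℕ) : s2 (2 * n) = s2 n := by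
  rcases Nat.eq_zero_or_pos n with rfl | h
  · simp
  · rw [s2_rec (2 * n) (by omega)]
    have : 2 * n % 2 = 0 := by omega
    have h2 : 2 * n / 2 = n := by omega
    simp [this, h2]

lemma s2_odd (n : ℕ) : s2 (2 * n + 1) = s2 n + 1 := by
  rw [s2_rec (2 * n + 1) (by omega)]
  have h1 : (2 * n + 1) % 2 = 1 := by omega
  have h2 : (2 * n + 1) / 2 = n := by omega
  rw [h1, h2]; ring

lemma s2_succ_tr (n : ℕ) : s2 (n + 1) + tr n = s2 n + 1 := by
  induction n using Nat.strong_induction_on with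
  | _ n ih =>
    rcases Nat.even_or_odd n with ⟨m, hm⟩ | ⟨m, hm⟩
    · have hn : n = 2 * m := by omega
      subst hn
      rw [tr_even, s2_odd, s2_even]
    · have hn : n = 2 * m + 1 := by omega
      subst hn
      have h1 : 2 * m + 1 + 1 = 2 * (m + 1) := by ring
      rw [h1, s2_even, tr_odd, s2_odd]
      have := ih m (by omega)
      omega

noncomputable section

def Ss (n : ℕ) : ℤ := ∑ j ∈ Finset.range n, (s2 j : ℤ)

lemma Ss_succ (n : ℕ) : Ss (n + 1) = Ss n + s2 n := Finset.sum_range_succ _ _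

lemma Ss_double (n : ℕ) : Ss (2 * n) = n + 2 * Ss n := by
  induction n with
  | zero => simp [Ss]
  | succ m ih =>
    have h1 : 2 * (m + 1) = 2 * m + 1 + 1 := by ring
    rw [h1, Ss_succ, Ss_succ, ih, Ss_succ, s2_even, s2_odd]
    push_cast
    ring

def F (k : ℕ) : ℤ := 3 * k + 3 * Ss k - Ss (3 * k)
def E (k : ℕ) : ℤ := (s2 (3 * k) : ℤ) - s2 k
def T (k : ℕ) : ℤ := tr (3 * k)
def Sl (k : ℕ) : ℤ := tr (3 * k + 1)

lemma sum_eq (k : ℕ) :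
    2 * (k : ℤ) + ∑ j ∈ Finset.range k, ((s2 j : ℤ) - (s2 (j + 2 * k) : ℤ)) = F k := by
  have h1 : ∑ j ∈ Finset.Ico (2 * k) (3 * k), (s2 j : ℤ)
      = ∑ j ∈ Finset.range k, (s2 (2 * k + j) : ℤ) := by
    rw [Finset.sum_Ico_eq_sum_range]
    have h3 : 3 * k - 2 * k = k := by omega
    rw [h3]
  have hsplit : Ss (3 * k) = Ss (2 * k) + ∑ j ∈ Finset.range k, (s2 (2 * k + j) : ℤ) := by
    rw [← h1]
    unfold Ss
    simp only [Finset.range_eq_Ico]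
    rw [Finset.sum_Ico_consecutive (fun j => (s2 j : ℤ)) (by omega : 0 ≤ 2 * k)
        (by omega : 2 * k ≤ 3 * k)]
  have hsum : ∑ j ∈ Finset.range k, ((s2 j : ℤ) - (s2 (j + 2 * k) : ℤ))
      = Ss k - ∑ j ∈ Finset.range k, (s2 (2 * k + j) : ℤ) := by
    rw [Finset.sum_sub_distrib]
    congr 1
    exact Finset.sum_congr rfl (fun j _ => by rw [add_comm j (2 * k)])
  rw [hsum]
  have hd := Ss_double k
  have : F k = 3 * k + 3 * Ss k - Ss (3 * k) := rfl
  rw [this, hsplit, hd]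
  push_cast
  ring

-- recursion lemmas
lemma E_even (k : ℕ) : E (2 * k) = E k := by
  unfold E
  have h : 3 * (2 * k) = 2 * (3 * k) := by ring
  rw [h, s2_even, s2_even]

lemma T_even (k : ℕ) : T (2 * k) = 0 := by
  unfold T
  have h : 3 * (2 * k) = 2 * (3 * k) := by ring
  rw [h, tr_even]
  simp

lemma Sl_even (k : ℕ) : Sl (2 * k) = 1 + T k := by
  unfold Sl T
  have h : 3 * (2 * k) + 1 = 2 * (3 * k) + 1 := by ring
  rw [h, tr_odd]
  push_cast; ring

lemma E_odd (k : ℕ) : E (2 * k + 1) = E k + 1 - T k := by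
  unfold E T
  have h : 3 * (2 * k + 1) = 2 * (3 * k + 1) + 1 := by ring
  rw [h, s2_odd]
  have h2 : (2 * k + 1) = 2 * k + 1 := rfl
  rw [s2_odd]
  have h3 := s2_succ_tr (3 * k)
  push_cast
  omega

lemma T_odd (k : ℕ) : T (2 * k + 1) = 1 + Sl k := by
  unfold T Sl
  have h : 3 * (2 * k + 1) = 2 * (3 * k + 1) + 1 := by ring
  rw [h, tr_odd]
  push_cast; ring

lemma Sl_odd (k : ℕ) : Sl (2 * k + 1) = 0 := by
  unfold Sl
  have h : 3 * (2 * k + 1) + 1 = 2 * (3 * k + 2) := by ring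
  rw [h, tr_even]
  simp

lemma F_even (k : ℕ) : F (2 * k) = 2 * F k := by
  unfold F
  have h1 : 3 * (2 * k) = 2 * (3 * k) := by ring
  rw [h1, Ss_double, Ss_double]
  push_cast
  ring

lemma F_odd (k : ℕ) : F (2 * k + 1) = 2 * F k + 1 + T k - 3 * E k := by
  unfold F T E
  have h1 : 3 * (2 * k + 1) = 2 * (3 * k + 1) + 1 := by ring
  rw [h1, Ss_succ, Ss_succ, Ss_double, Ss_double, Ss_succ]
  have h2 : (2 * (3 * k + 1) : ℕ) = 2 * (3 * k) + 2 := by ring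
  rw [h2]
  have h3 : (2 * (3 * k) + 2 : ℕ) = 2 * (3 * k + 1) := by ring
  rw [h3, s2_even, s2_even]
  have h4 := s2_succ_tr (3 * k)
  push_cast
  omega

lemma main_inv (n : ℕ) (hn : 1 ≤ n) :
    1 ≤ F n ∧ E n ≤ F n ∧ 2 * E n ≤ F n + T n ∧ 3 * E n ≤ F n + 2 * T n + Sl n := by
  induction n using Nat.strong_induction_on with
  | _ n ih =>
    rcases Nat.lt_or_ge n 2 with h2 | h2
    · -- n = 1
      have h1 : n = 1 := by omega
      subst h1
      have e1 : s2 1 = 1 := by have := s2_odd 0; simp [s2_zero] at this; omega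
      have e2 : s2 2 = 1 := by have := s2_even 1; rw [this, e1]
      have e3 : s2 3 = 2 := by have := s2_odd 1; rw [this, e1]
      have t0 : tr 0 = 0 := by rw [tr]; norm_num
      have t1 : tr 1 = 1 := by have := tr_odd 0; simp [t0] at this; omega
      have t3 : tr 3 = 2 := by have := tr_odd 1; rw [this, t1]
      have t4 : tr 4 = 0 := by have := tr_even 2; simpa using this
      have hF : F 1 = 1 := by
        unfold F Ss
        rw [show (3 : ℕ) * 1 = 3 from rfl]
        simp [Finset.sum_range_succ, s2_zero, e1, e2]
      have hE : E 1 = 1 := by unfold E; rw [show (3:ℕ)*1 = 3 from rfl, e3, e1]; norm_num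
      have hT : T 1 = 2 := by unfold T; rw [show (3:ℕ)*1 = 3 from rfl, t3]; norm_num
      have hS : Sl 1 = 0 := by unfold Sl; rw [show (3:ℕ)*1+1 = 4 from rfl, t4]; norm_num
      rw [hF, hE, hT, hS]
      norm_num
    · -- n ≥ 2
      have hm : 1 ≤ n / 2 := by omega
      obtain ⟨IH1, IH2, IH3, IH4⟩ := ih (n / 2) (by omega) hm
      set m := n / 2 with hmdef
      rcases Nat.even_or_odd n with ⟨l, hl⟩ | ⟨l, hl⟩
      · have hn2 : n = 2 * m := by omega
        rw [hn2, F_even, E_even, T_even, Sl_even]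
        refine ⟨by linarith, by linarith, by linarith, by linarith⟩
      · have hn2 : n = 2 * m + 1 := by omega
        rw [hn2, F_odd, E_odd, T_odd, Sl_odd]
        refine ⟨by linarith, by linarith, by linarith, by linarith⟩

end

theorem even_case_positive (k : ℕ) (hk : 0 < k) :
    0 < 2 * (k : ℤ) + ∑ j ∈ Finset.range k, ((s2 j : ℤ) - (s2 (j + 2 * k) : ℤ)) := by
  rw [sum_eq]
  have h := (main_inv k hk).1
  linarith
end
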